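/- arXiv:2603.20417 — 6 statements merged into one kernel-verified Lean document; each statement's English description precedes it below -/
import Mathlib

section
/- Let K be a field of characteristic ≠ 2 and let (L, [-,-], ω) be an ω-Lie algebra over K with dim_K L ≥ 3. Then the bilinear form ω is skew-symmetric, i.e., ω(x,y) = -ω(y,x) for all x, y ∈ L (equivalently, ω(y,y) = 0 for all y ∈ L). -/
/-- Let `K` be a field of characteristic `≠ 2` and `(L, [-,-], ω)` an
ω-Lie algebra over `K` with `dim_K L ≥ 3`.  Then `ω` is skew-symmetric. -/
theorem omegaLie_form_skew
    (K : Type*) [Field K] (hchar : (2 : K) ≠ 0)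
    (L : Type*) [AddCommGroup L] [Module K L] [FiniteDimensional K L]
    (hdim : 3 ≤ Module.finrank K L)
    (br : L →ₗ[K] L →ₗ[K] L) (ω : L →ₗ[K] L →ₗ[K] K)
    (hskew : ∀ x y : L, br x y = - br y x)
    (hJac : ∀ x y z : L,
      br (br x y) z + br (br y z) x + br (br z x) y
        = ω x y • z + ω y z • x + ω z x • y) :
    (∀ x y : L, ω x y = - ω y x) ∧ (∀ y : L, ω y y = 0) := by
  -- [y,y] = 0
  have hbr0 : ∀ y : L, br y y = 0 := by
    intro y
    have h := hskew y y
    have h2 : (2 : K) • br y y = 0 := by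
      rw [two_smul]
      nth_rewrite 1 [h]
      simp
    rcases smul_eq_zero.mp h2 with h' | h'
    · exact absurd h' hchar
    · exact h'
  -- key identity: ω(y,y) • z + (ω(y,z) + ω(z,y)) • y = 0
  have key : ∀ y z : L, ω y y • z + (ω y z + ω z y) • y = 0 := by
    intro y z
    have h := hJac y y z
    rw [hbr0 y] at h
    have hzy : br (br z y) y = - br (br y z) y := by
      rw [hskew z y, map_neg, LinearMap.neg_apply]
    rw [hzy] at h
    simp only [map_zero, LinearMap.zero_apply, zero_add, add_neg_cancel] at h
    rw [add_smul, ← add_assoc]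
    exact h.symm
  -- with z independent from y
  have indep : ∀ y z : L, y ≠ 0 → z ∉ Submodule.span K {y} →
      ω y y = 0 ∧ ω y z + ω z y = 0 := by
    intro y z hy hz
    have h := key y z
    by_cases ha : ω y y = 0
    · refine ⟨ha, ?_⟩
      rw [ha, zero_smul, zero_add] at h
      rcases smul_eq_zero.mp h with h' | h'
      · exact h'
      · exact absurd h' hy
    · exfalso
      apply hz
      have hz' : z = (ω y y)⁻¹ • (-((ω y z + ω z y) • y)) := by
        have h' : ω y y • z = -((ω y z + ω z y) • y) :=
          eq_neg_of_add_eq_zero_left h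
        rw [← h', smul_smul, inv_mul_cancel₀ ha, one_smul]
      rw [hz']
      exact Submodule.smul_mem _ _ (Submodule.neg_mem _
        (Submodule.smul_mem _ _ (Submodule.mem_span_singleton_self y)))
  -- there is always z outside span {y}
  have exz : ∀ y : L, ∃ z : L, z ∉ Submodule.span K {y} := by
    intro y
    by_contra h
    push_neg at h
    have htop : Submodule.span K ({y} : Set L) = ⊤ :=
      Submodule.eq_top_iff'.mpr h
    have h1 : Module.finrank K (Submodule.span K ({y} : Set L)) ≤ 1 := by
      by_cases hy0 : y = 0
      · rw [hy0, Submodule.span_zero_singleton]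
        simp [finrank_bot]
      · rw [finrank_span_singleton hy0]
    have h2 : Module.finrank K (Submodule.span K ({y} : Set L))
        = Module.finrank K L := by
      rw [htop]; exact finrank_top K L
    omega
  -- ω(y,y) = 0
  have diag : ∀ y : L, ω y y = 0 := by
    intro y
    by_cases hy : y = 0
    · simp [hy]
    · obtain ⟨z, hz⟩ := exz y
      exact (indep y z hy hz).1
  refine ⟨?_, diag⟩
  intro x y
  by_cases hx : x = 0
  · simp [hx]
  by_cases hy : y ∈ Submodule.span K {x}
  · obtain ⟨c, rfl⟩ := Submodule.mem_span_singleton.mp hy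
    simp [diag x]
  · have := (indep x y hx hy).2
    linear_combination this
end

section
/- Let K be a field of characteristic ≠ 2, let L be a K-vector space with dim_K L ≥ 3, and let [-,-] : L × L → L be a bilinear map with [x,y] = -[y,x]. If ω₁ and ω₂ are two bilinear forms on L such that both (L, [-,-], ω₁) and (L, [-,-], ω₂) are ω-Lie algebras, then ω₁ = ω₂. -/
/-- If `ω₁` and `ω₂` are two bilinear forms on a skew-symmetric bracket
algebra `(L, [-,-])` with `dim_K L ≥ 3` such that both `(L, [-,-], ω₁)` and
`(L, [-,-], ω₂)` are ω-Lie algebras, then `ω₁ = ω₂`. -/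
theorem omegaLie_form_unique
    (K : Type*) [Field K] (hchar : (2 : K) ≠ 0)
    (L : Type*) [AddCommGroup L] [Module K L] [FiniteDimensional K L]
    (hdim : 3 ≤ Module.finrank K L)
    (br : L →ₗ[K] L →ₗ[K] L)
    (hskew : ∀ x y : L, br x y = - br y x)
    (ω₁ ω₂ : L →ₗ[K] L →ₗ[K] K)
    (hJac₁ : ∀ x y z : L,
      br (br x y) z + br (br y z) x + br (br z x) y
        = ω₁ x y • z + ω₁ y z • x + ω₁ z x • y)
    (hJac₂ : ∀ x y z : L,
      br (br x y) z + br (br y z) x + br (br z x) y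
        = ω₂ x y • z + ω₂ y z • x + ω₂ z x • y) :
    ω₁ = ω₂ := by
  -- δ x y := ω₁ x y - ω₂ x y satisfies δ x y • z + δ y z • x + δ z x • y = 0
  have key : ∀ x y z : L,
      (ω₁ x y - ω₂ x y) • z + (ω₁ y z - ω₂ y z) • x + (ω₁ z x - ω₂ z x) • y = 0 := by
    intro x y z
    have h := (hJac₁ x y z).symm.trans (hJac₂ x y z)
    simp only [sub_smul]
    abel_nf
    linear_combination (norm := module) h
  ext x y
  -- pick z outside span {x, y}
  have hlt : Submodule.span K ({x, y} : Set L) < ⊤ := by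
    rw [lt_top_iff_ne_top]
    intro h
    have h2 : Module.finrank K (Submodule.span K ({x, y} : Set L)) ≤ 2 := by
      classical
      have h3 := finrank_span_finset_le_card (R := K) ({x, y} : Finset L)
      have h4 : (({x, y} : Finset L) : Set L) = ({x, y} : Set L) := by simp
      rw [h4] at h3
      exact h3.trans ((Finset.card_insert_le _ _).trans (by simp))
    rw [h] at h2
    simp only [finrank_top] at h2
    omega
  obtain ⟨z, -, hz⟩ := SetLike.exists_of_lt hlt
  have h := key x y z
  have hmem : (ω₁ x y - ω₂ x y) • z ∈ Submodule.span K ({x, y} : Set L) := by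
    have hx : x ∈ Submodule.span K ({x, y} : Set L) :=
      Submodule.subset_span (by simp)
    have hy : y ∈ Submodule.span K ({x, y} : Set L) :=
      Submodule.subset_span (by simp)
    have : (ω₁ x y - ω₂ x y) • z
        = -((ω₁ y z - ω₂ y z) • x + (ω₁ z x - ω₂ z x) • y) := by
      linear_combination (norm := module) h
    rw [this]
    exact Submodule.neg_mem _ (Submodule.add_mem _ (Submodule.smul_mem _ _ hx)
      (Submodule.smul_mem _ _ hy))
  by_contra hne
  have hc : ω₁ x y - ω₂ x y ≠ 0 := sub_ne_zero.mpr hne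
  exact hz ((Submodule.smul_mem_iff _ hc).mp hmem)
end

section
/- Let K be a field of characteristic ≠ 2, let V be a 3-dimensional K-vector space with basis (x, y, z), and let ω be the bilinear form on V with ω(x,y) = 1, ω(y,x) = -1, and ω vanishing on all other pairs of basis vectors. Let [-,-] be the skew-symmetric bilinear bracket on V determined by [x,y] = a₁x + a₂y + a₃z, [x,z] = b₁x + b₂y + b₃z, [y,z] = c₁x + c₂y + c₃z, with a_i, b_i, c_i ∈ K. Then (V, [-,-], ω) is an ω-Lie algebra if and only if the following three equations hold: a₂b₁ - a₁b₂ - b₃c₂ + b₂c₃ = 0, a₂c₁ + b₃c₁ - a₁c₂ - b₁c₃ = 0, and a₃b₁ - a₁b₃ + a₃c₂ - a₂c₃ + 1 = 0. -/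
set_option maxHeartbeats 1600000 in
set_option linter.unreachableTactic false in
/-- For the 3-dimensional space `V = K³` with basis `x, y, z`, the form
`ω` with `ω(x,y) = 1 = -ω(y,x)` and `ω` vanishing on all other pairs of basis vectors,
and the skew bracket determined by `[x,y] = a₁x + a₂y + a₃z`, `[x,z] = b₁x + b₂y + b₃z`,
`[y,z] = c₁x + c₂y + c₃z`, the triple `(V, [-,-], ω)` is an ω-Lie algebra iff the three
polynomial relations hold. -/
theorem dim3_omegaLie_iff_relations
    (K : Type*) [Field K] (hchar : (2 : K) ≠ 0)
    (x y z : Fin 3 → K)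
    (hx : x = Pi.single 0 1) (hy : y = Pi.single 1 1) (hz : z = Pi.single 2 1)
    (ω : (Fin 3 → K) →ₗ[K] (Fin 3 → K) →ₗ[K] K)
    (hωxy : ω x y = 1) (hωyx : ω y x = -1)
    (hωxz : ω x z = 0) (hωzx : ω z x = 0)
    (hωyz : ω y z = 0) (hωzy : ω z y = 0)
    (hωxx : ω x x = 0) (hωyy : ω y y = 0) (hωzz : ω z z = 0)
    (a₁ a₂ a₃ b₁ b₂ b₃ c₁ c₂ c₃ : K)
    (br : (Fin 3 → K) →ₗ[K] (Fin 3 → K) →ₗ[K] (Fin 3 → K))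
    (hskew : ∀ u v : Fin 3 → K, br u v = - br v u)
    (hxy : br x y = a₁ • x + a₂ • y + a₃ • z)
    (hxz : br x z = b₁ • x + b₂ • y + b₃ • z)
    (hyz : br y z = c₁ • x + c₂ • y + c₃ • z) :
    (∀ u v w : Fin 3 → K,
        br (br u v) w + br (br v w) u + br (br w u) v
          = ω u v • w + ω v w • u + ω w u • v) ↔
    (a₂ * b₁ - a₁ * b₂ - b₃ * c₂ + b₂ * c₃ = 0 ∧
     a₂ * c₁ + b₃ * c₁ - a₁ * c₂ - b₁ * c₃ = 0 ∧
     a₃ * b₁ - a₁ * b₃ + a₃ * c₂ - a₂ * c₃ + 1 = 0) := by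
  have hself : ∀ u : Fin 3 → K, br u u = 0 := by
    intro u
    have h := hskew u u
    have h2 : (2 : K) • br u u = 0 := by
      rw [two_smul]; nth_rewrite 1 [h]; rw [neg_add_cancel]
    rcases smul_eq_zero.mp h2 with h' | h'
    · exact absurd h' hchar
    · exact h'
  have hyx : br y x = -(a₁ • x + a₂ • y + a₃ • z) := by rw [hskew y x, hxy]
  have hzx : br z x = -(b₁ • x + b₂ • y + b₃ • z) := by rw [hskew z x, hxz]
  have hzy : br z y = -(c₁ • x + c₂ • y + c₃ • z) := by rw [hskew z y, hyz]
  have hxx := hself x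
  have hyy := hself y
  have hzz := hself z
  have hrep : ∀ u : Fin 3 → K, u = u 0 • x + u 1 • y + u 2 • z := by
    intro u
    funext i
    fin_cases i <;> simp [hx, hy, hz]
  constructor
  · intro H
    have h := H x y z
    simp only [hxy, hxz, hyz, hyx, hzx, hzy, hxx, hyy, hzz, map_add, map_smul,
      map_neg, map_zero, LinearMap.add_apply, LinearMap.smul_apply,
      LinearMap.neg_apply, LinearMap.zero_apply,
      smul_add, smul_neg, smul_zero, smul_smul,
      hωxy, hωyz, hωzx, one_smul, zero_smul, add_zero, zero_add] at h
    have h0 := congrFun h 0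
    have h1 := congrFun h 1
    have h2 := congrFun h 2
    simp only [hx, hy, hz, Pi.add_apply, Pi.smul_apply, Pi.neg_apply, smul_eq_mul,
      Pi.single_apply, Fin.ext_iff] at h0 h1 h2
    norm_num at h0 h1 h2
    refine ⟨by linear_combination -h1, by linear_combination h0, by linear_combination -h2⟩
  · rintro ⟨h1, h2, h3⟩ u v w
    rw [hrep u, hrep v, hrep w]
    simp only [map_add, map_smul, map_neg, smul_add, smul_neg, smul_smul,
      hxy, hxz, hyz, hyx, hzx, hzy, hxx, hyy, hzz, LinearMap.add_apply, LinearMap.smul_apply, LinearMap.neg_apply, LinearMap.zero_apply,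
      hωxy, hωyx, hωxz, hωzx, hωyz, hωzy, hωxx, hωyy, hωzz,
      smul_zero, add_zero, zero_add, zero_smul, one_smul, neg_smul, neg_neg,
      smul_eq_mul, mul_one, mul_zero, mul_neg]
    funext i
    fin_cases i <;>
      simp only [hx, hy, hz, Pi.add_apply, Pi.smul_apply, Pi.neg_apply, smul_eq_mul,
        Pi.single_apply, Fin.ext_iff] <;>
      norm_num <;>
      [ (first
          | linear_combination (u 0 * (v 1 * w 2 - v 2 * w 1) - u 1 * (v 0 * w 2 - v 2 * w 0)
              + u 2 * (v 0 * w 1 - v 1 * w 0)) * h2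
          | linear_combination (-(u 0 * (v 1 * w 2 - v 2 * w 1) - u 1 * (v 0 * w 2 - v 2 * w 0)
              + u 2 * (v 0 * w 1 - v 1 * w 0))) * h2);
        (first
          | linear_combination (u 0 * (v 1 * w 2 - v 2 * w 1) - u 1 * (v 0 * w 2 - v 2 * w 0)
              + u 2 * (v 0 * w 1 - v 1 * w 0)) * h1
          | linear_combination (-(u 0 * (v 1 * w 2 - v 2 * w 1) - u 1 * (v 0 * w 2 - v 2 * w 0)
              + u 2 * (v 0 * w 1 - v 1 * w 0))) * h1);
        (first
          | linear_combination (u 0 * (v 1 * w 2 - v 2 * w 1) - u 1 * (v 0 * w 2 - v 2 * w 0)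
              + u 2 * (v 0 * w 1 - v 1 * w 0)) * h3
          | linear_combination (-(u 0 * (v 1 * w 2 - v 2 * w 1) - u 1 * (v 0 * w 2 - v 2 * w 0)
              + u 2 * (v 0 * w 1 - v 1 * w 0))) * h3)]
end

section
/- Let K be a field of characteristic ≠ 2 and let R = K[x₁,x₂,x₃,y₁,y₂,y₃,z₁,z₂,z₃] be the polynomial ring in 9 variables over K. Then the ideal ⟨f₁⟩ generated by f₁ = x₂z₁ + y₃z₁ - x₁z₂ - y₁z₃ and the ideal ⟨f₁, f₂⟩ generated by f₁ and f₂ = x₃y₁ - x₁y₃ + x₃z₂ - x₂z₃ + 1 are both prime ideals of R. -/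
/-!
Everything reduces to one fact: if `A` is a domain, `a ∈ A` is prime and `a ∤ b`, then `aX + b`
generates a prime ideal of `A[X]`. Indeed, modulo `aX + b` every `p` becomes a constant after
multiplication by a power of `a`; no nonzero constant is a multiple of `aX + b`; and `a` is a
nonzerodivisor modulo `aX + b`, since `a ∣ b q` forces `a ∣ q`.

Now `f₁` is linear in `x₁` with coefficient `-z₂`. Since `f₁` does not involve `x₃` and
`f₂ = (y₁ + z₂) x₃ + (1 - x₁ y₃ - x₂ z₃)`, the ideal `⟨f₁, f₂⟩` is prime as soon as `y₁ + z₂` is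
prime modulo `f₁`, i.e. `⟨f₁, y₁ + z₂⟩` is prime. Setting `y₁ = -z₂` turns this into the
primality of `x₂ z₁ + y₃ z₁ - x₁ z₂ + z₂ z₃`, which is again linear in `x₁`.
-/

open MvPolynomial

/-- `R = K[x₁,x₂,x₃,y₁,y₂,y₃,z₁,z₂,z₃]`: the variables `X 0, X 1, X 2` play the roles of
`x₁, x₂, x₃`; `X 3, X 4, X 5` of `y₁, y₂, y₃`; and `X 6, X 7, X 8` of `z₁, z₂, z₃`. -/
noncomputable def poly_f₁ (K : Type*) [Field K] : MvPolynomial (Fin 9) K :=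
  X 1 * X 6 + X 5 * X 6 - X 0 * X 7 - X 3 * X 8

noncomputable def poly_f₂ (K : Type*) [Field K] : MvPolynomial (Fin 9) K :=
  X 2 * X 3 - X 0 * X 5 + X 2 * X 7 - X 1 * X 8 + 1

open Ideal

theorem Ideal.isPrime_span_of_isPrime_span_image {R S : Type*} [CommRing R] [CommRing S]
    (e : R ≃+* S) {s : Set R} (h : (span (e '' s)).IsPrime) : (span s).IsPrime := by
  rw [← comap_map_of_bijective e e.bijective (I := span s), map_span]
  exact comap_isPrime e _

theorem Ideal.isPrime_span_pair_of_ker_eq_span {R S : Type*} [CommRing R] [CommRing S]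
    {f : R →+* S} (hf : Function.Surjective f) {r s : R} (hker : RingHom.ker f = span {r})
    (hs : (span {f s}).IsPrime) : (span {r, s}).IsPrime := by
  have hspan : span {r, s} = (span {f s}).comap f := by
    rw [← Set.image_singleton, ← map_span, comap_map_of_surjective f hf, ← RingHom.ker_eq_comap_bot,
      hker, span_insert, sup_comm]
  rw [hspan]
  exact comap_isPrime f _

namespace Polynomial

variable {A : Type*} [CommRing A]

theorem exists_C_pow_mul_sub_C_mem_span (a b : A) (p : A[X]) :
    ∃ n r, C a ^ n * p - C r ∈ span {C a * X + C b} := by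
  induction p using Polynomial.induction_on' with
  | add p q hp hq =>
    obtain ⟨n, r, hr⟩ := hp
    obtain ⟨m, s, hs⟩ := hq
    refine ⟨n + m, a ^ m * r + a ^ n * s, ?_⟩
    convert add_mem (mul_mem_left _ (C a ^ m) hr) (mul_mem_left _ (C a ^ n) hs) using 1
    simp only [map_add, map_mul, map_pow]
    ring
  | monomial k c =>
    refine ⟨k, c * (-b) ^ k, mem_span_singleton.mpr ?_⟩
    have h := sub_dvd_pow_sub_pow (C a * X) (C (-b)) k
    rw [sub_eq_add_neg, ← map_neg, neg_neg] at h
    convert h.mul_left (C c) using 1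
    rw [← C_mul_X_pow_eq_monomial]
    simp only [map_mul, map_pow]
    ring

variable {a b : A}

theorem eq_zero_of_C_mem_span [IsDomain A] (ha : a ≠ 0) {r : A}
    (hr : C r ∈ span {C a * X + C b}) : r = 0 := by
  by_contra hr0
  have := natDegree_le_of_dvd (mem_span_singleton.mp hr) (C_ne_zero.mpr hr0)
  rw [natDegree_linear ha, natDegree_C] at this
  omega

theorem mem_span_of_C_mul_mem_span [IsDomain A] (ha : Prime a) (hb : ¬ a ∣ b) {p : A[X]}
    (hp : C a * p ∈ span {C a * X + C b}) : p ∈ span {C a * X + C b} := by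
  obtain ⟨q, hq⟩ := mem_span_singleton'.mp hp
  have hcoeff (k : ℕ) : a ∣ q.coeff k := by
    have hk := congrArg (coeff · k) hq
    simp only [add_mul, mul_comm _ (C a * X + C b), coeff_add, mul_assoc, coeff_C_mul] at hk
    exact (ha.dvd_or_dvd ⟨p.coeff k - (X * q).coeff k, by linear_combination hk⟩).resolve_left hb
  obtain ⟨q', rfl⟩ := (C_dvd_iff_dvd_coeff a q).mpr hcoeff
  refine mem_span_singleton'.mpr ⟨q', mul_left_cancel₀ (C_ne_zero.mpr ha.ne_zero) ?_⟩
  rw [← hq]; ring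

theorem isPrime_span_C_mul_X_add_C [IsDomain A] (ha : Prime a) (hb : ¬ a ∣ b) :
    (span {C a * X + C b}).IsPrime := by
  have mem_of_C_pow_mul_mem (n : ℕ) {p : A[X]} (hp : C a ^ n * p ∈ span {C a * X + C b}) :
      p ∈ span {C a * X + C b} := by
    induction n with
    | zero => simpa using hp
    | succ n ih => exact ih (mem_span_of_C_mul_mem_span ha hb (by rwa [pow_succ', mul_assoc] at hp))
  refine ⟨fun h => one_ne_zero (eq_zero_of_C_mem_span ha.ne_zero (b := b) (by simp [h])),
    fun {p q} hpq => ?_⟩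
  obtain ⟨n, r, hr⟩ := exists_C_pow_mul_sub_C_mem_span a b p
  obtain ⟨m, s, hs⟩ := exists_C_pow_mul_sub_C_mem_span a b q
  have hrs : C (r * s) ∈ span {C a * X + C b} := by
    have := mul_mem_left _ (C a ^ (n + m)) hpq
    convert sub_mem (sub_mem this (mul_mem_left _ (C r) hs)) (mul_mem_left _ (C a ^ m * q) hr)
      using 1
    simp only [map_mul]; ring
  rcases mul_eq_zero.mp (eq_zero_of_C_mem_span ha.ne_zero hrs) with rfl | rfl
  · exact .inl (mem_of_C_pow_mul_mem n (by simpa using hr))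
  · exact .inr (mem_of_C_pow_mul_mem m (by simpa using hs))

theorem isPrime_span_C_C_mul_X_add_C {g : A} (hg : (span {g}).IsPrime)
    (hga : (span {g, a}).IsPrime) (ha : a ∉ span {g}) (hb : b ∉ span {g, a}) :
    (span {C g, C a * X + C b}).IsPrime := by
  let π := Ideal.Quotient.mk (span {g})
  have hle : span {g} ≤ span {g, a} := span_mono (by simp)
  have hspan : span {π a} = (span {g, a}).map π := by
    rw [map_span, Set.image_pair, Quotient.eq_zero_iff_mem.mpr (mem_span_singleton_self g),
      span_insert, span_singleton_eq_bot.mpr rfl, bot_sup_eq]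
  have hπa : Prime (π a) := by
    refine (span_singleton_prime (mt Quotient.eq_zero_iff_mem.mp ha)).mp ?_
    rw [hspan]
    exact map_isPrime_of_surjective Quotient.mk_surjective (by rwa [mk_ker])
  have hπb : ¬ π a ∣ π b := by
    rwa [← mem_span_singleton, hspan, mem_quotient_iff_mem hle]
  refine isPrime_span_pair_of_ker_eq_span (f := mapRingHom π)
    (map_surjective π Quotient.mk_surjective) ?_ ?_
  · rw [ker_mapRingHom, mk_ker, map_span, Set.image_singleton]
  · simpa using isPrime_span_C_mul_X_add_C hπa hπb

theorem isPrime_span_X_sub_C_pair {p : A[X]} {c : A} (h : (span {p.eval c}).IsPrime) :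
    (span {X - C c, p}).IsPrime :=
  isPrime_span_pair_of_ker_eq_span (f := evalRingHom c) (fun x => ⟨C x, eval_C⟩)
    (ker_evalRingHom c) h

end Polynomial

namespace MvPolynomial

variable {R : Type*} [CommRing R] {n : ℕ}

variable (R) in
noncomputable def finSuccEquiv' (i : Fin (n + 1)) :
    MvPolynomial (Fin (n + 1)) R ≃ₐ[R] Polynomial (MvPolynomial (Fin n) R) :=
  (renameEquiv R (_root_.finSuccEquiv' i)).trans (optionEquivLeft R (Fin n))

@[simp]
theorem finSuccEquiv'_X_self (i : Fin (n + 1)) : finSuccEquiv' R i (X i) = Polynomial.X := by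
  simp [finSuccEquiv']

@[simp]
theorem finSuccEquiv'_rename_succAbove (i : Fin (n + 1)) (p : MvPolynomial (Fin n) R) :
    finSuccEquiv' R i (rename i.succAbove p) = Polynomial.C p := by
  have h : (finSuccEquiv' R i).toAlgHom.comp (rename i.succAbove) = Polynomial.CAlgHom := by
    ext j
    simp [finSuccEquiv']
  exact DFunLike.congr_fun h p

theorem notMem_span_of_eval_eq_zero {σ : Type*} {s : Set (MvPolynomial σ R)}
    {p : MvPolynomial σ R} (x : σ → R) (hs : ∀ q ∈ s, eval x q = 0) (hp : eval x p ≠ 0) :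
    p ∉ span s :=
  fun h => hp ((span_le (I := RingHom.ker (eval x))).mpr hs h)

variable (i : Fin (n + 1)) {g a b : MvPolynomial (Fin n) R}

theorem isPrime_span_rename_succAbove (hg : (span {g}).IsPrime) :
    (span {rename i.succAbove g}).IsPrime := by
  refine isPrime_span_of_isPrime_span_image (finSuccEquiv' R i).toRingEquiv ?_
  simpa [map_span] using isPrime_map_C_of_isPrime (P := span {g})

theorem isPrime_span_rename_mul_X_add_rename [IsDomain R] (ha : Prime a) (hb : ¬ a ∣ b) :
    (span {rename i.succAbove a * X i + rename i.succAbove b}).IsPrime := by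
  refine isPrime_span_of_isPrime_span_image (finSuccEquiv' R i).toRingEquiv ?_
  simpa [Set.image_singleton] using Polynomial.isPrime_span_C_mul_X_add_C ha hb

theorem isPrime_span_rename_pair_rename_mul_X_add_rename (hg : (span {g}).IsPrime)
    (hga : (span {g, a}).IsPrime) (ha : a ∉ span {g}) (hb : b ∉ span {g, a}) :
    (span {rename i.succAbove g, rename i.succAbove a * X i + rename i.succAbove b}).IsPrime := by
  refine isPrime_span_of_isPrime_span_image (finSuccEquiv' R i).toRingEquiv ?_
  simpa [Set.image_pair] using Polynomial.isPrime_span_C_C_mul_X_add_C hg hga ha hb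

theorem isPrime_span_X_sub_rename_pair_rename_mul_X_add_rename {c : MvPolynomial (Fin n) R}
    (h : (span {a * c + b}).IsPrime) :
    (span {X i - rename i.succAbove c,
      rename i.succAbove a * X i + rename i.succAbove b}).IsPrime := by
  refine isPrime_span_of_isPrime_span_image (finSuccEquiv' R i).toRingEquiv ?_
  simpa [Set.image_pair] using
    Polynomial.isPrime_span_X_sub_C_pair (p := .C a * .X + .C b) (c := c) (by simpa using h)

end MvPolynomial

-- `f₁` does not involve `x₃`; this is `f₁` in the variables `x₁, x₂, y₁, y₂, y₃, z₁, z₂, z₃`.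
noncomputable def poly_f₁' (R : Type*) [CommRing R] : MvPolynomial (Fin 8) R :=
  X 1 * X 5 + X 4 * X 5 - X 0 * X 6 - X 2 * X 7

section

variable {R : Type*} [CommRing R] [IsDomain R]

theorem isPrime_span_poly_f₁' : (span {poly_f₁' R}).IsPrime := by
  have hb : ¬ -X 5 ∣ (X 0 * X 4 + X 3 * X 4 - X 1 * X 6 : MvPolynomial (Fin 7) R) := by
    rw [← mem_span_singleton]
    exact notMem_span_of_eval_eq_zero ![1, 0, 0, 0, 1, 0, 0] (by simp) (by simp)
  convert isPrime_span_rename_mul_X_add_rename 0 X_prime.neg hb using 3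
  simp [poly_f₁']
  ring

theorem isPrime_span_poly_f₁'_pair : (span {poly_f₁' R, X 2 + X 6}).IsPrime := by
  -- `f₁` at `y₁ = -z₂`, in the variables `x₁, x₂, y₂, y₃, z₁, z₂, z₃`
  have hc : (span {(-X 6 * -X 5 + (X 1 * X 4 + X 3 * X 4 - X 0 * X 5) :
      MvPolynomial (Fin 7) R)}).IsPrime := by
    have hb : ¬ -X 4 ∣ (X 4 * X 5 + X 0 * X 3 + X 2 * X 3 : MvPolynomial (Fin 6) R) := by
      rw [← mem_span_singleton]
      exact notMem_span_of_eval_eq_zero ![1, 0, 0, 1, 0, 0] (by simp) (by simp)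
    convert isPrime_span_rename_mul_X_add_rename 0 X_prime.neg hb using 3
    simp
    ring
  rw [Set.pair_comm]
  convert isPrime_span_X_sub_rename_pair_rename_mul_X_add_rename 2 hc using 3
  · simp [Fin.succAbove]
  · simp [poly_f₁', Fin.succAbove]
    ring

end

theorem span_f₁_f₂_prime_general
    (K : Type*) [Field K] :
    (Ideal.span {poly_f₁ K}).IsPrime ∧
      (Ideal.span {poly_f₁ K, poly_f₂ K}).IsPrime := by
  have hf₁ : poly_f₁ K = rename (Fin.succAbove 2) (poly_f₁' K) := by
    simp [poly_f₁, poly_f₁', Fin.succAbove]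
  have hf₂ : poly_f₂ K = rename (Fin.succAbove 2) (X 2 + X 6) * X 2 +
      rename (Fin.succAbove 2) (1 - X 0 * X 4 - X 1 * X 7) := by
    simp [poly_f₂, Fin.succAbove]; ring
  rw [hf₁, hf₂]
  refine ⟨isPrime_span_rename_succAbove 2 isPrime_span_poly_f₁',
    isPrime_span_rename_pair_rename_mul_X_add_rename 2 isPrime_span_poly_f₁'
      isPrime_span_poly_f₁'_pair ?_ ?_⟩
  · exact notMem_span_of_eval_eq_zero ![0, 0, 1, 0, 0, 0, 0, 0] (by simp [poly_f₁']) (by simp)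
  · exact notMem_span_of_eval_eq_zero 0 (by simp [poly_f₁']) (by simp)

/-- The ideals `⟨f₁⟩` and `⟨f₁, f₂⟩` are prime ideals of
`R = K[x₁,x₂,x₃,y₁,y₂,y₃,z₁,z₂,z₃]`. -/
theorem span_f₁_f₂_prime
    (K : Type*) [Field K] (hchar : (2 : K) ≠ 0) :
    (Ideal.span {poly_f₁ K}).IsPrime ∧
      (Ideal.span {poly_f₁ K, poly_f₂ K}).IsPrime :=
  span_f₁_f₂_prime_general K
end

section
/- Let K be a field of characteristic ≠ 2 and let R = K[x₁,x₂,x₃,y₁,y₂,y₃,z₁,z₂,z₃]. Then f₁ = x₂z₁ + y₃z₁ - x₁z₂ - y₁z₃, f₂ = x₃y₁ - x₁y₃ + x₃z₂ - x₂z₃ + 1, f₃ = x₂y₁ - x₁y₂ - y₃z₂ + y₂z₃ form a regular sequence in R: f₁ is not a zero divisor in R, the class of f₂ is not a zero divisor in R/⟨f₁⟩, and the class of f₃ is not a zero divisor in R/⟨f₁, f₂⟩ (and ⟨f₁,f₂,f₃⟩ ≠ R is not needed beyond these). In particular the ideal ⟨f₁, f₂, f₃⟩ is a complete intersection ideal.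 -/
/-
Over a domain, `c X - e` is prime as soon as `c` is prime and `c ∤ e`. In the tower
`A[z₁][x₃]`, `A = K[x₁,x₂,y₁,y₂,y₃,z₂,z₃]`, we have `f₁ = c₁ z₁ - e₁` and `f₂ = c₂ x₃ - e₂` with
`c₁ = x₂ + y₃`, `e₁ = x₁z₂ + y₁z₃`, `c₂ = y₁ + z₂`, `e₂ = x₁y₃ + x₂z₃ - 1`. The criterion over `A`
makes `⟨f₁⟩` prime. Over `A/⟨c₂⟩`, where `c₁` is prime because `⟨c₂, c₁⟩` is (linear forms in
disjoint variables), it makes `⟨c₂, f₁⟩` prime in `A[z₁]`, i.e. `c₂` prime in `A[z₁]/⟨f₁⟩`; over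
that ring it makes `⟨f₁, f₂⟩` prime. Modulo a prime ideal every element outside it is a
non-zero-divisor, and `f₂ ∉ ⟨f₁⟩`, `f₃ ∉ ⟨f₁, f₂⟩`, like the non-divisibilities needed above, are
checked by evaluating at points.
-/

open MvPolynomial

noncomputable def poly_f₃ (K : Type*) [Field K] : MvPolynomial (Fin 9) K :=
  X 1 * X 3 - X 0 * X 4 - X 5 * X 7 + X 4 * X 8

open scoped Polynomial

namespace Ideal
variable {R T : Type*} [CommRing R] [CommRing T]

theorem comap_span_singleton_eq_span_pair {φ : R →+* T} (hφ : Function.Surjective φ) {a : R}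
    (hker : RingHom.ker φ = span {a}) (b : R) : comap φ (span {φ b}) = span {a, b} := by
  rw [← Set.image_singleton, ← map_span, comap_map_of_surjective' φ hφ, hker, sup_comm,
    ← span_union, Set.singleton_union]

theorem isPrime_span_pair_iff {φ : R →+* T} (hφ : Function.Surjective φ) {a : R}
    (hker : RingHom.ker φ = span {a}) (b : R) :
    (span {a, b}).IsPrime ↔ (span {φ b}).IsPrime := by
  rw [← comap_span_singleton_eq_span_pair hφ hker]
  refine ⟨fun _ => ?_, fun _ => comap_isPrime φ _⟩
  rw [← map_comap_of_surjective φ hφ (span {φ b})]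
  exact map_isPrime_of_surjective hφ (ker_le_comap φ)

theorem isPrime_span_pair_of_ringEquiv (e : R ≃+* T) {a b : R}
    (h : (span {e a, e b}).IsPrime) : (span {a, b}).IsPrime := by
  have : span {a, b} = comap e (span {e a, e b}) := by
    rw [← map_symm, map_span, Set.image_pair, e.symm_apply_apply, e.symm_apply_apply]
  exact this ▸ comap_isPrime (e : R →+* T) _

theorem Quotient.mk_dvd_mk_iff (a b c : R) :
    Quotient.mk (span {a}) b ∣ Quotient.mk (span {a}) c ↔ c ∈ span {a, b} := by
  rw [← comap_span_singleton_eq_span_pair Quotient.mk_surjective mk_ker, mem_comap,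
    mem_span_singleton]

theorem Quotient.prime_mk_of_isPrime_span_pair {a b : R} (h : (span {a, b}).IsPrime)
    (hb : b ∉ span {a}) : Prime (Quotient.mk (span {a}) b) :=
  (span_singleton_prime (by rwa [Ne, Quotient.eq_zero_iff_mem])).1
    ((isPrime_span_pair_iff Quotient.mk_surjective mk_ker b).1 h)

theorem notMem_span_of_ringHom (ψ : R →+* T) {s : Set R} (hs : ∀ x ∈ s, ψ x = 0) {r : R}
    (hr : ψ r ≠ 0) : r ∉ span s :=
  fun h => hr (span_le.2 (fun x hx => RingHom.mem_ker.2 (hs x hx)) h)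

end Ideal

namespace Polynomial
variable {R : Type*} [CommRing R]

theorem isPrime_span_C_pair_iff (a : R) (p : R[X]) :
    (Ideal.span {C a, p}).IsPrime ↔
      (Ideal.span {p.map (Ideal.Quotient.mk (Ideal.span {a}))}).IsPrime := by
  have hker : RingHom.ker (mapRingHom (Ideal.Quotient.mk (Ideal.span {a}))) =
      Ideal.span {C a} := by
    rw [ker_mapRingHom, Ideal.mk_ker, Ideal.map_span, Set.image_singleton]
  exact Ideal.isPrime_span_pair_iff (map_surjective _ Ideal.Quotient.mk_surjective) hker p

section IsDomain
variable [IsDomain R]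

-- `C c ^ n * p = q.eval (C c * X)` for `q = p.scaleRoots c`, and `q` vanishes at `e`.
theorem C_mul_X_sub_C_dvd_C_pow_natDegree_mul {c e : R} (hc : c ≠ 0) {p : R[X]}
    (hp : aeval (algebraMap R (FractionRing R) e / algebraMap R (FractionRing R) c) p = 0) :
    C c * X - C e ∣ C c ^ p.natDegree * p := by
  have hroot : (p.scaleRoots c).eval e = 0 := IsFractionRing.injective R (FractionRing R) <| by
    rw [← aeval_algebraMap_apply_eq_algebraMap_eval, map_zero,
      scaleRoots_aeval_eq_zero_of_aeval_div_eq_zero (IsFractionRing.injective R _) hp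
        (mem_nonZeroDivisors_of_ne_zero hc)]
  have := sub_dvd_eval_sub (C c * X) (C e) ((p.scaleRoots c).map C)
  rwa [eval_map, eval_map, scaleRoots_eval₂_mul, eval₂_C_X, eval₂_hom, hroot, C_0,
    sub_zero] at this

-- `C c * X - C e` divides every polynomial vanishing at `e / c`: it divides `C c ^ n * p`,
-- and the powers of the prime `C c` cancel since `C c` does not divide `C c * X - C e`.
theorem prime_C_mul_X_sub_C {c e : R} (hc : Prime c) (hce : ¬ c ∣ e) :
    Prime (C c * X - C e) := by
  set t := algebraMap R (FractionRing R) e / algebraMap R (FractionRing R) c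
  have hroot : aeval t (C c * X - C e) = 0 := by
    simp [t, mul_div_cancel₀ _ ((map_ne_zero_iff _ (IsFractionRing.injective R _)).2 hc.ne_zero)]
  have hnd : ¬ C c ∣ C c * X - C e := fun h => hce <| by
    simpa [C_dvd_iff_dvd_coeff] using (C_dvd_iff_dvd_coeff _ _).1 h 0
  have hdvd : ∀ p : R[X], aeval t p = 0 → C c * X - C e ∣ p := fun p hp => by
    obtain ⟨q, hq⟩ := C_mul_X_sub_C_dvd_C_pow_natDegree_mul hc.ne_zero hp
    obtain ⟨r, rfl⟩ := (prime_C_iff.2 hc).pow_dvd_of_dvd_mul_left _ hnd ⟨p, by rw [← hq]⟩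
    exact ⟨r, mul_left_cancel₀ (pow_ne_zero _ (C_ne_zero.2 hc.ne_zero)) (by rw [hq]; ring)⟩
  refine ⟨fun h => hc.ne_zero (by simpa using congrArg (coeff · 1) h), fun h => ?_,
    fun f g hfg => ?_⟩
  · simpa [hroot] using h.map (aeval t)
  · have : aeval t f * aeval t g = 0 := by
      obtain ⟨k, hk⟩ := hfg
      rw [← map_mul, hk, map_mul, hroot, zero_mul]
    exact (mul_eq_zero.1 this).imp (hdvd f) (hdvd g)

end IsDomain

theorem isPrime_span_C_pair_C_mul_X_sub_C {a c e : R} (ha : (Ideal.span {a}).IsPrime)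
    (hac : (Ideal.span {a, c}).IsPrime) (hc : c ∉ Ideal.span {a})
    (he : e ∉ Ideal.span {a, c}) : (Ideal.span {C a, C c * X - C e}).IsPrime := by
  have hprime := prime_C_mul_X_sub_C (Ideal.Quotient.prime_mk_of_isPrime_span_pair hac hc)
    ((Ideal.Quotient.mk_dvd_mk_iff a c e).not.2 he)
  rw [isPrime_span_C_pair_iff, Polynomial.map_sub, Polynomial.map_mul, map_C, map_X, map_C,
    Ideal.span_singleton_prime hprime.ne_zero]
  exact hprime

end Polynomial

namespace MvPolynomial
variable {σ R : Type*} [DecidableEq σ] [CommRing R]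

noncomputable def equivPolynomialSubtypeNe (i : σ) :
    MvPolynomial σ R ≃ₐ[R] (MvPolynomial {j // j ≠ i} R)[X] :=
  (renameEquiv R (Equiv.optionSubtypeNe i).symm).trans (optionEquivLeft R _)

theorem equivPolynomialSubtypeNe_X_self (i : σ) :
    equivPolynomialSubtypeNe (R := R) i (X i) = Polynomial.X := by
  simp [equivPolynomialSubtypeNe]

theorem equivPolynomialSubtypeNe_X_of_ne {i j : σ} (h : j ≠ i) :
    equivPolynomialSubtypeNe (R := R) i (X j) = Polynomial.C (X ⟨j, h⟩) := by
  simp [equivPolynomialSubtypeNe, Equiv.optionSubtypeNe_symm_of_ne h]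

variable [IsDomain R]

theorem prime_X_add_X {i j : σ} (h : i ≠ j) : Prime (X i + X j : MvPolynomial σ R) := by
  rw [← MulEquiv.prime_iff (equivPolynomialSubtypeNe i), map_add,
    equivPolynomialSubtypeNe_X_self, equivPolynomialSubtypeNe_X_of_ne h.symm]
  simpa using Polynomial.prime_X_sub_C (-(X ⟨j, h.symm⟩ : MvPolynomial {j // j ≠ i} R))

theorem isPrime_span_X_add_X_pair {i j k l : σ} (hij : i ≠ j) (hik : i ≠ k) (hil : i ≠ l)
    (hkl : k ≠ l) : (Ideal.span {X i + X j, X k + X l} : Ideal (MvPolynomial σ R)).IsPrime := by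
  set e := (equivPolynomialSubtypeNe (R := R) i).toRingEquiv
  have hij' : e (X i + X j) = Polynomial.X - Polynomial.C (-X ⟨j, hij.symm⟩) := by
    simp [e, equivPolynomialSubtypeNe_X_self, equivPolynomialSubtypeNe_X_of_ne hij.symm]
  have hkl' : e (X k + X l) = Polynomial.C (X ⟨k, hik.symm⟩ + X ⟨l, hil.symm⟩) := by
    simp [e, equivPolynomialSubtypeNe_X_of_ne hik.symm, equivPolynomialSubtypeNe_X_of_ne hil.symm]
  apply Ideal.isPrime_span_pair_of_ringEquiv e
  rw [hij', hkl', Ideal.isPrime_span_pair_iff (fun p => ⟨Polynomial.C p, Polynomial.eval_C⟩)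
    (Polynomial.ker_evalRingHom _), Polynomial.coe_evalRingHom, Polynomial.eval_C]
  have hprime := prime_X_add_X (R := R) (i := (⟨k, hik.symm⟩ : {j // j ≠ i}))
    (j := ⟨l, hil.symm⟩) (by simpa using hkl)
  exact (Ideal.span_singleton_prime hprime.ne_zero).2 hprime

end MvPolynomial

namespace PolyF

open Ideal

variable (K : Type*) [Field K]

-- `x₃ ↦ none` and `z₁ ↦ some none` become the outer and the inner polynomial variable;
-- `x₁, x₂, y₁, y₂, y₃, z₂, z₃` become `X 0, …, X 6`.
def towerVars : Fin 9 ≃ Option (Option (Fin 7)) where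
  toFun := ![some (some 0), some (some 1), none, some (some 2), some (some 3), some (some 4),
    some none, some (some 5), some (some 6)]
  invFun
    | none => 2
    | some none => 6
    | some (some i) => ![0, 1, 3, 4, 5, 7, 8] i
  left_inv := by decide
  right_inv := by decide

noncomputable def towerEquiv : MvPolynomial (Fin 9) K ≃ₐ[K] (MvPolynomial (Fin 7) K)[X][X] :=
  (renameEquiv K towerVars).trans <|
    (optionEquivLeft K _).trans <| Polynomial.mapAlgEquiv (optionEquivLeft K _)

noncomputable def c₁ : MvPolynomial (Fin 7) K := X 1 + X 4
noncomputable def e₁ : MvPolynomial (Fin 7) K := X 0 * X 5 + X 2 * X 6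
noncomputable def c₂ : MvPolynomial (Fin 7) K := X 2 + X 5
noncomputable def e₂ : MvPolynomial (Fin 7) K := X 0 * X 4 + X 1 * X 6 - 1

noncomputable def F₁ : (MvPolynomial (Fin 7) K)[X] :=
  Polynomial.C (c₁ K) * Polynomial.X - Polynomial.C (e₁ K)

noncomputable def F₂ : (MvPolynomial (Fin 7) K)[X][X] :=
  Polynomial.C (Polynomial.C (c₂ K)) * Polynomial.X - Polynomial.C (Polynomial.C (e₂ K))

theorem towerEquiv_f₁ : towerEquiv K (poly_f₁ K) = Polynomial.C (F₁ K) := by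
  simp only [poly_f₁, map_add, map_sub, map_mul]
  simp [towerEquiv, towerVars, optionEquivLeft_X_some, F₁, c₁, e₁]
  ring

theorem towerEquiv_f₂ : towerEquiv K (poly_f₂ K) = F₂ K := by
  simp only [poly_f₂, map_add, map_sub, map_mul, map_one]
  simp [towerEquiv, towerVars, optionEquivLeft_X_some, optionEquivLeft_X_none, F₂, c₂, e₂]
  ring

theorem c₁_notMem_span_c₂ : c₁ K ∉ span {c₂ K} :=
  notMem_span_of_ringHom (eval ![0, 1, 0, 0, 0, 0, 0]) (by simp [c₂]) (by simp [c₁])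

theorem e₁_notMem_span_c₂_c₁ : e₁ K ∉ span {c₂ K, c₁ K} :=
  notMem_span_of_ringHom (eval ![0, 0, 1, 0, 0, -1, 1]) (by simp [c₁, c₂]) (by simp [e₁])

theorem C_c₂_notMem_span_F₁ : Polynomial.C (c₂ K) ∉ span {F₁ K} :=
  notMem_span_of_ringHom (Polynomial.eval₂RingHom (eval ![0, 0, 1, 0, 0, 0, 0]) 0)
    (by simp [F₁, c₁, e₁]) (by simp [c₂])

theorem C_e₂_notMem_span_F₁_C_c₂ : Polynomial.C (e₂ K) ∉ span {F₁ K, Polynomial.C (c₂ K)} :=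
  notMem_span_of_ringHom (Polynomial.eval₂RingHom (eval 0) 0) (by simp [F₁, c₂, e₁])
    (by simp [e₂])

theorem prime_F₁ : Prime (F₁ K) :=
  Polynomial.prime_C_mul_X_sub_C (prime_X_add_X (by decide)) fun h =>
    e₁_notMem_span_c₂_c₁ K (span_mono (by simp) (mem_span_singleton.2 h))

theorem isPrime_span_C_c₂_F₁ : (span {Polynomial.C (c₂ K), F₁ K}).IsPrime :=
  Polynomial.isPrime_span_C_pair_C_mul_X_sub_C
    ((span_singleton_prime (prime_X_add_X (by decide)).ne_zero).2 (prime_X_add_X (by decide)))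
    (isPrime_span_X_add_X_pair (by decide) (by decide) (by decide) (by decide))
    (c₁_notMem_span_c₂ K) (e₁_notMem_span_c₂_c₁ K)

theorem isPrime_span_C_F₁_F₂ : (span {Polynomial.C (F₁ K), F₂ K}).IsPrime :=
  Polynomial.isPrime_span_C_pair_C_mul_X_sub_C
    ((span_singleton_prime (prime_F₁ K).ne_zero).2 (prime_F₁ K))
    (Set.pair_comm _ _ ▸ isPrime_span_C_c₂_F₁ K) (C_c₂_notMem_span_F₁ K)
    (C_e₂_notMem_span_F₁_C_c₂ K)

end PolyF

open PolyF in
theorem prime_poly_f₁ (K : Type*) [Field K] : Prime (poly_f₁ K) := by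
  rw [← MulEquiv.prime_iff (N := (MvPolynomial (Fin 7) K)[X][X]) (towerEquiv K),
    towerEquiv_f₁, Polynomial.prime_C_iff]
  exact prime_F₁ K

open PolyF in
theorem isPrime_span_poly_f₁_poly_f₂ (K : Type*) [Field K] :
    (Ideal.span {poly_f₁ K, poly_f₂ K}).IsPrime :=
  Ideal.isPrime_span_pair_of_ringEquiv (T := (MvPolynomial (Fin 7) K)[X][X])
    (towerEquiv K).toRingEquiv <| by
      simpa [towerEquiv_f₁, towerEquiv_f₂] using isPrime_span_C_F₁_F₂ K

theorem poly_f₂_notMem_span_poly_f₁ (K : Type*) [Field K] :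
    poly_f₂ K ∉ Ideal.span {poly_f₁ K} :=
  Ideal.notMem_span_of_ringHom (eval 0) (by simp [poly_f₁]) (by simp [poly_f₂])

theorem poly_f₃_notMem_span_poly_f₁_poly_f₂ (K : Type*) [Field K] :
    poly_f₃ K ∉ Ideal.span {poly_f₁ K, poly_f₂ K} :=
  Ideal.notMem_span_of_ringHom (eval ![0, 1, 0, 0, 1, 0, 0, 0, 1]) (by simp [poly_f₁, poly_f₂])
    (by simp [poly_f₃])

theorem f₁_f₂_f₃_regular_sequence_general
    (K : Type*) [Field K] :
    (∀ r : MvPolynomial (Fin 9) K, poly_f₁ K * r = 0 → r = 0) ∧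
    (∀ r : MvPolynomial (Fin 9) K,
        poly_f₂ K * r ∈ Ideal.span {poly_f₁ K} → r ∈ Ideal.span {poly_f₁ K}) ∧
    (∀ r : MvPolynomial (Fin 9) K,
        poly_f₃ K * r ∈ Ideal.span {poly_f₁ K, poly_f₂ K} →
          r ∈ Ideal.span {poly_f₁ K, poly_f₂ K}) := by
  have hf₁ := prime_poly_f₁ K
  have hspan_f₁ : (Ideal.span {poly_f₁ K}).IsPrime :=
    (Ideal.span_singleton_prime hf₁.ne_zero).2 hf₁
  refine ⟨fun r h => ?_, fun r h => ?_, fun r h => ?_⟩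
  · exact (mul_eq_zero.1 h).resolve_left hf₁.ne_zero
  · exact (hspan_f₁.mem_or_mem h).resolve_left (poly_f₂_notMem_span_poly_f₁ K)
  · exact ((isPrime_span_poly_f₁_poly_f₂ K).mem_or_mem h).resolve_left
      (poly_f₃_notMem_span_poly_f₁_poly_f₂ K)

/-- `f₁, f₂, f₃` is a regular sequence in `R`: `f₁` is not a zero
divisor in `R`, the class of `f₂` is not a zero divisor in `R/⟨f₁⟩`, and the class of
`f₃` is not a zero divisor in `R/⟨f₁, f₂⟩`.  In particular `⟨f₁, f₂, f₃⟩` is a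
complete intersection ideal. -/
theorem f₁_f₂_f₃_regular_sequence
    (K : Type*) [Field K] (hchar : (2 : K) ≠ 0) :
    (∀ r : MvPolynomial (Fin 9) K, poly_f₁ K * r = 0 → r = 0) ∧
    (∀ r : MvPolynomial (Fin 9) K,
        poly_f₂ K * r ∈ Ideal.span {poly_f₁ K} → r ∈ Ideal.span {poly_f₁ K}) ∧
    (∀ r : MvPolynomial (Fin 9) K,
        poly_f₃ K * r ∈ Ideal.span {poly_f₁ K, poly_f₂ K} →
          r ∈ Ideal.span {poly_f₁ K, poly_f₂ K}) :=
  f₁_f₂_f₃_regular_sequence_general K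
end

section
/- Let K be a field of characteristic ≠ 2, let V be a 3-dimensional K-vector space with basis (x, y, z), and let ω be the bilinear form with ω(x,y) = 1 = -ω(y,x) and ω vanishing on all other pairs of basis vectors. Let [-,-] be the skew-symmetric bilinear bracket with [x,y] = z, [x,z] = b₁x + b₂y, [y,z] = c₁x + c₂y, where b₁c₂ - b₂c₁ ≠ 0. Then a linear automorphism g of V preserving ω satisfies g([g⁻¹(x), g⁻¹(y)]) = z if and only if the matrix of g with respect to the basis (x, y, z) has the block form [[S, 0], [0, 1]] with S a 2 × 2 matrix of determinant 1; that is, g fixes z, preserves the span of x and y, and acts on span{x,y} by an element of SL₂(K). -/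
/-- **Lemma 4.3.** For the bracket `[x,y] = z`, `[x,z] = b₁x + b₂y`,
`[y,z] = c₁x + c₂y` with `b₁c₂ - b₂c₁ ≠ 0`, an ω-preserving linear automorphism `g` of
`V` satisfies `g [g⁻¹ x, g⁻¹ y] = z` if and only if its matrix with respect to the basis
`(x, y, z)` has the block form `[[S, 0], [0, 1]]` with `S ∈ SL₂(K)`: that is, `g` fixes
`z` and acts on `span{x, y}` by a matrix of determinant `1`. -/
theorem stabilizer_of_bracket_eq_SL₂
    (K : Type*) [Field K] (hchar : (2 : K) ≠ 0)
    (x y z : Fin 3 → K)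
    (hx : x = Pi.single 0 1) (hy : y = Pi.single 1 1) (hz : z = Pi.single 2 1)
    (ω : (Fin 3 → K) →ₗ[K] (Fin 3 → K) →ₗ[K] K)
    (hωxy : ω x y = 1) (hωyx : ω y x = -1)
    (hωxz : ω x z = 0) (hωzx : ω z x = 0)
    (hωyz : ω y z = 0) (hωzy : ω z y = 0)
    (hωxx : ω x x = 0) (hωyy : ω y y = 0) (hωzz : ω z z = 0)
    (b₁ b₂ c₁ c₂ : K)
    (br : (Fin 3 → K) →ₗ[K] (Fin 3 → K) →ₗ[K] (Fin 3 → K))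
    (hskew : ∀ u v : Fin 3 → K, br u v = - br v u)
    (hxy : br x y = z)
    (hxz : br x z = b₁ • x + b₂ • y)
    (hyz : br y z = c₁ • x + c₂ • y)
    (hΔ : b₁ * c₂ - b₂ * c₁ ≠ 0)
    (g : (Fin 3 → K) ≃ₗ[K] (Fin 3 → K))
    (hg : ∀ u v : Fin 3 → K, ω (g u) (g v) = ω u v) :
    g (br (g.symm x) (g.symm y)) = z ↔
      (g z = z ∧
        ∃ s₁ s₂ s₃ s₄ : K, s₁ * s₄ - s₂ * s₃ = 1 ∧
          g x = s₁ • x + s₂ • y ∧ g y = s₃ • x + s₄ • y) := by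
  -- coordinates of the basis vectors
  have hx0 : x 0 = 1 := by simp [hx]
  have hx1 : x 1 = 0 := by simp [hx, Pi.single_apply]
  have hx2 : x 2 = 0 := by simp [hx, Pi.single_apply]
  have hy0 : y 0 = 0 := by simp [hy, Pi.single_apply]
  have hy1 : y 1 = 1 := by simp [hy]
  have hy2 : y 2 = 0 := by simp [hy, Pi.single_apply]
  have hz0 : z 0 = 0 := by simp [hz, Pi.single_apply]
  have hz1 : z 1 = 0 := by simp [hz, Pi.single_apply]
  have hz2 : z 2 = 1 := by simp [hz]
  -- decomposition of any vector
  have hdecomp : ∀ u : Fin 3 → K, u = u 0 • x + u 1 • y + u 2 • z := by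
    intro u
    funext i
    fin_cases i <;>
      simp [hx0, hx1, hx2, hy0, hy1, hy2, hz0, hz1, hz2]
  -- bracket vanishes on the diagonal
  have hbrzero : ∀ u : Fin 3 → K, br u u = 0 := by
    intro u
    have h := hskew u u
    have h2 : br u u + br u u = 0 := by nth_rewrite 2 [h]; exact add_neg_cancel _
    have h3 : (2 : K) • br u u = 0 := by rw [two_smul]; exact h2
    rcases smul_eq_zero.mp h3 with h4 | h4
    · exact absurd h4 hchar
    · exact h4
  have hyx : br y x = -z := by rw [hskew y x, hxy]
  have hzx : br z x = -(b₁ • x + b₂ • y) := by rw [hskew z x, hxz]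
  have hzy : br z y = -(c₁ • x + c₂ • y) := by rw [hskew z y, hyz]
  -- bracket in coordinates
  have hbr : ∀ u v : Fin 3 → K,
      br u v = (u 0 * v 1 - u 1 * v 0) • z + (u 0 * v 2 - u 2 * v 0) • (b₁ • x + b₂ • y)
        + (u 1 * v 2 - u 2 * v 1) • (c₁ • x + c₂ • y) := by
    intro u v
    conv_lhs => rw [hdecomp u, hdecomp v]
    simp only [map_add, map_smul, LinearMap.add_apply, LinearMap.smul_apply,
      hxy, hxz, hyz, hyx, hzx, hzy, hbrzero]
    module
  -- ω in coordinates
  have hω : ∀ u v : Fin 3 → K, ω u v = u 0 * v 1 - u 1 * v 0 := by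
    intro u v
    conv_lhs => rw [hdecomp u, hdecomp v]
    simp only [map_add, map_smul, LinearMap.add_apply, LinearMap.smul_apply,
      hωxy, hωyx, hωxz, hωzx, hωyz, hωzy, hωxx, hωyy, hωzz, smul_eq_mul]
    ring
  constructor
  · -- forward direction
    intro H
    set a := g.symm x with ha
    set b := g.symm y with hb
    have hga : g a = x := by rw [ha]; exact g.apply_symm_apply x
    have hgb : g b = y := by rw [hb]; exact g.apply_symm_apply y
    have h1 : a 0 * b 1 - a 1 * b 0 = 1 := by
      have h := hg a b
      rw [hga, hgb, hωxy, hω] at h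
      exact h.symm
    have D : g x 0 * g y 1 - g x 1 * g y 0 = 1 := by
      have h := hg x y
      rw [hωxy, hω] at h
      exact h
    have hgz1 : g z 1 = 0 := by
      have h := hg z a
      rw [hga, hω, hω, hz0, hz1, hx0, hx1] at h
      linear_combination -h
    have hgz0 : g z 0 = 0 := by
      have h := hg z b
      rw [hgb, hω, hω, hz0, hz1, hy0, hy1] at h
      linear_combination h
    rw [hbr a b] at H
    simp only [map_add, map_smul] at H
    have E0 := congrFun H 0
    have E1 := congrFun H 1
    have E2 := congrFun H 2
    simp only [Pi.add_apply, Pi.smul_apply, smul_eq_mul, hz0, hz1, hz2,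
      hgz0, hgz1, mul_zero, zero_add, add_zero] at E0 E1 E2
    have hu : (a 0 * b 2 - a 2 * b 0) * b₁ + (a 1 * b 2 - a 2 * b 1) * c₁ = 0 := by
      linear_combination (g y 1) * E0 - (g y 0) * E1
        - ((a 0 * b 2 - a 2 * b 0) * b₁ + (a 1 * b 2 - a 2 * b 1) * c₁) * D
    have hv : (a 0 * b 2 - a 2 * b 0) * b₂ + (a 1 * b 2 - a 2 * b 1) * c₂ = 0 := by
      linear_combination (g x 0) * E1 - (g x 1) * E0
        - ((a 0 * b 2 - a 2 * b 0) * b₂ + (a 1 * b 2 - a 2 * b 1) * c₂) * D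
    have hαΔ : (a 0 * b 2 - a 2 * b 0) * (b₁ * c₂ - b₂ * c₁) = 0 := by
      linear_combination c₂ * hu - c₁ * hv
    have hβΔ : (a 1 * b 2 - a 2 * b 1) * (b₁ * c₂ - b₂ * c₁) = 0 := by
      linear_combination b₁ * hv - b₂ * hu
    have hα : a 0 * b 2 - a 2 * b 0 = 0 := (mul_eq_zero.mp hαΔ).resolve_right hΔ
    have hβ : a 1 * b 2 - a 2 * b 1 = 0 := (mul_eq_zero.mp hβΔ).resolve_right hΔ
    have hgz2 : g z 2 = 1 := by
      linear_combination E2 - (b₁ * g x 2 + b₂ * g y 2) * hα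
        - (c₁ * g x 2 + c₂ * g y 2) * hβ - g z 2 * h1
    have hgz : g z = z := by
      funext i
      fin_cases i <;> simp [hgz0, hgz1, hgz2, hz0, hz1, hz2]
    have hp2 : a 2 = 0 := by
      linear_combination -(a 2) * h1 + a 1 * hα - a 0 * hβ
    have hq2 : b 2 = 0 := by
      linear_combination -(b 2) * h1 + b 1 * hα - b 0 * hβ
    have hxa : g (a 0 • x + a 1 • y) = x := by
      have h := hdecomp a
      rw [hp2, zero_smul, add_zero] at h
      rw [← h, hga]
    have hyb : g (b 0 • x + b 1 • y) = y := by
      have h := hdecomp b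
      rw [hq2, zero_smul, add_zero] at h
      rw [← h, hgb]
    refine ⟨hgz, b 1, -(a 1), -(b 0), a 0, ?_, ?_, ?_⟩
    · linear_combination h1
    · have e1 : g (b 1 • (a 0 • x + a 1 • y) + (-(a 1)) • (b 0 • x + b 1 • y))
          = b 1 • x + (-(a 1)) • y := by
        rw [map_add, map_smul, map_smul, hxa, hyb]
      have e2 : b 1 • (a 0 • x + a 1 • y) + (-(a 1)) • (b 0 • x + b 1 • y) = x := by
        match_scalars
        all_goals first | (linear_combination h1) | (linear_combination -h1) | (linear_combination (0:K) * h1)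
      rw [e2] at e1
      exact e1
    · have e1 : g ((-(b 0)) • (a 0 • x + a 1 • y) + a 0 • (b 0 • x + b 1 • y))
          = (-(b 0)) • x + a 0 • y := by
        rw [map_add, map_smul, map_smul, hxa, hyb]
      have e2 : (-(b 0)) • (a 0 • x + a 1 • y) + a 0 • (b 0 • x + b 1 • y) = y := by
        match_scalars
        all_goals first | (linear_combination h1) | (linear_combination -h1) | (linear_combination (0:K) * h1)
      rw [e2] at e1
      exact e1
  · rintro ⟨hgz, s₁, s₂, s₃, s₄, hdet, hgx, hgy⟩
    have hax : g (s₄ • x - s₂ • y) = x := by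
      rw [map_sub, map_smul, map_smul, hgx, hgy]
      match_scalars
      all_goals first | (linear_combination hdet) | (linear_combination -hdet) | (linear_combination (0:K) * hdet)
    have hby : g ((-s₃) • x + s₁ • y) = y := by
      rw [map_add, map_smul, map_smul, hgx, hgy]
      match_scalars
      all_goals first | (linear_combination hdet) | (linear_combination -hdet) | (linear_combination (0:K) * hdet)
    have ha' : g.symm x = s₄ • x - s₂ • y := g.symm_apply_eq.mpr hax.symm
    have hb' : g.symm y = (-s₃) • x + s₁ • y := g.symm_apply_eq.mpr hby.symm
    have c0 : (s₄ • x - s₂ • y) 0 = s₄ := by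
      simp [hx0, hy0]
    have c1 : (s₄ • x - s₂ • y) 1 = -s₂ := by
      simp [hx1, hy1]
    have c2 : (s₄ • x - s₂ • y) 2 = 0 := by
      simp [hx2, hy2]
    have d0 : ((-s₃) • x + s₁ • y) 0 = -s₃ := by
      simp [hx0, hy0]
    have d1 : ((-s₃) • x + s₁ • y) 1 = s₁ := by
      simp [hx1, hy1]
    have d2 : ((-s₃) • x + s₁ • y) 2 = 0 := by
      simp [hx2, hy2]
    have key : br (s₄ • x - s₂ • y) ((-s₃) • x + s₁ • y) = z := by
      rw [hbr, c0, c1, c2, d0, d1, d2]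
      match_scalars
      all_goals first | (linear_combination hdet) | (linear_combination -hdet) | (linear_combination (0:K) * hdet)
    rw [ha', hb', key, hgz]
end
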